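/- arXiv:1308.0744 — 7 statements merged into one kernel-verified Lean document; each statement's English description precedes it below -/
import Mathlib

section
/- Let A be a p-adically separated, p-torsion-free commutative ring, let ν be an integer not divisible by p, and let M₁, M₂ ∈ GL_n(A) be matrices with M₁ ≡ M₂ ≡ 1 (mod p) and M₁^ν = M₂^ν. Then M₁ = M₂. -/
open Matrix

/-- Lemma 3.8 of Buium–Dupuy: if `A` is `p`-adically separated and `p`-torsion free,
`ν` is an integer not divisible by `p`, and `M₁ ≡ M₂ ≡ 1 (mod p)` in `GL n A` with
`M₁ ^ ν = M₂ ^ ν`, then `M₁ = M₂`. -/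
theorem stmt_0 (p : ℕ) (hp : p.Prime) (A : Type*) [CommRing A]
    (hsep : ∀ a : A, (∀ m : ℕ, (p : A) ^ m ∣ a) → a = 0)
    (htf : ∀ a : A, (p : A) * a = 0 → a = 0)
    (ν : ℤ) (hν : ¬ (p : ℤ) ∣ ν)
    (n : ℕ) (M₁ M₂ : GL (Fin n) A)
    (h1 : ∀ i j, (p : A) ∣ ((M₁ : Matrix (Fin n) (Fin n) A) - 1) i j)
    (h2 : ∀ i j, (p : A) ∣ ((M₂ : Matrix (Fin n) (Fin n) A) - 1) i j)
    (hpow : M₁ ^ ν = M₂ ^ ν) :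
    M₁ = M₂ := by
  classical
  set k : ℕ := ν.natAbs with hkdef
  have hpk : ¬ p ∣ k := by
    intro h
    exact hν (Int.dvd_natAbs.mp (Int.natCast_dvd_natCast.mpr h))
  -- reduce to natural powers
  have hkpow : M₁ ^ k = M₂ ^ k := by
    rcases le_or_gt 0 ν with h | h
    · have hk : (k : ℤ) = ν := Int.natAbs_of_nonneg h
      have : M₁ ^ (k : ℤ) = M₂ ^ (k : ℤ) := by rw [hk]; exact hpow
      simpa [zpow_natCast] using this
    · have hk : (k : ℤ) = -ν := by
        rw [hkdef, Int.natCast_natAbs, abs_of_neg h]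
      have : M₁ ^ (k : ℤ) = M₂ ^ (k : ℤ) := by
        rw [hk, _root_.zpow_neg, _root_.zpow_neg, hpow]
      simpa [zpow_natCast] using this
  have hB : (M₁ : Matrix (Fin n) (Fin n) A) ^ k = (M₂ : Matrix (Fin n) (Fin n) A) ^ k := by
    have := congrArg (Units.val) hkpow
    simpa [Units.val_pow_eq_pow_val] using this
  set B₁ : Matrix (Fin n) (Fin n) A := (M₁ : Matrix (Fin n) (Fin n) A) with hB₁def
  set B₂ : Matrix (Fin n) (Fin n) A := (M₂ : Matrix (Fin n) (Fin n) A) with hB₂def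
  set D : Matrix (Fin n) (Fin n) A := B₁ - B₂ with hDdef
  -- main induction: D ≡ 0 mod p^(m+1) for all m
  have key : ∀ m : ℕ, ∀ i j, (p : A) ^ (m + 1) ∣ D i j := by
    intro m
    induction m with
    | zero =>
      intro i j
      have : D i j = ((B₁ - 1) - (B₂ - 1)) i j := by
        simp [hDdef]
      rw [this, Matrix.sub_apply]
      simpa using dvd_sub (h1 i j) (h2 i j)
    | succ m ih =>
      intro i j
      set I : Ideal A := Ideal.span {(p : A) ^ (m + 2)} with hIdef
      set f : A →+* A ⧸ I := Ideal.Quotient.mk I with hfdef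
      set φ : Matrix (Fin n) (Fin n) A →+* Matrix (Fin n) (Fin n) (A ⧸ I) :=
        f.mapMatrix with hφdef
      have hφ0 : ∀ C : Matrix (Fin n) (Fin n) A,
          (∀ i j, (p : A) ^ (m + 2) ∣ C i j) → φ C = 0 := by
        intro C hC
        ext i j
        show f (C i j) = 0
        exact Ideal.Quotient.eq_zero_iff_mem.mpr
          (Ideal.mem_span_singleton.mpr (hC i j))
      have hdm : ∀ (s t : ℕ) (C E : Matrix (Fin n) (Fin n) A),
          (∀ i j, (p : A) ^ s ∣ C i j) → (∀ i j, (p : A) ^ t ∣ E i j) →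
          ∀ i j, (p : A) ^ (s + t) ∣ (C * E) i j := by
        intro s t C E hC hE i j
        rw [Matrix.mul_apply]
        refine Finset.dvd_sum fun l _ => ?_
        rw [pow_add]
        exact mul_dvd_mul (hC i l) (hE l j)
      set x : Matrix (Fin n) (Fin n) (A ⧸ I) := φ B₂ with hxdef
      set d : Matrix (Fin n) (Fin n) (A ⧸ I) := φ D with hddef
      have h2' : ∀ i j, (p : A) ^ 1 ∣ (B₂ - 1) i j := by
        intro i j; simpa using h2 i j
      -- d * x = d
      have hdx : d * x = d := by
        have h0 : d * (x - 1) = 0 := by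
          rw [hddef, hxdef, ← _root_.map_one φ, ← map_sub, ← _root_.map_mul]
          exact hφ0 _ (fun i j => hdm (m + 1) 1 D (B₂ - 1) ih h2' i j)
        rw [mul_sub, mul_one, sub_eq_zero] at h0
        exact h0
      -- d * d = 0
      have hdd : d * d = 0 := by
        have h0 : φ (D * D) = 0 := by
          apply hφ0
          intro i j
          exact dvd_trans (pow_dvd_pow _ (by omega))
            (hdm (m + 1) (m + 1) D D ih ih i j)
        rw [_root_.map_mul] at h0
        exact h0
      -- x^t * d = d
      have hxd : x * d = d := by
        have h0 : (x - 1) * d = 0 := by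
          rw [hxdef, hddef, ← _root_.map_one φ, ← map_sub, ← _root_.map_mul]
          refine hφ0 _ (fun i j => ?_)
          have := hdm 1 (m + 1) (B₂ - 1) D h2' ih i j
          rwa [show 1 + (m + 1) = m + 2 by omega] at this
        rw [sub_mul, one_mul, sub_eq_zero] at h0
        exact h0
      have hxkd : ∀ t : ℕ, x ^ t * d = d := by
        intro t
        induction t with
        | zero => simp
        | succ t iht =>
          rw [pow_succ, mul_assoc, hxd, iht]
      -- binomial with nilpotent
      have hbinom : ∀ t : ℕ, (x + d) ^ t = x ^ t + t • d := by
        intro t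
        induction t with
        | zero => simp
        | succ t iht =>
          rw [pow_succ, iht, add_mul, mul_add, mul_add, smul_mul_assoc,
            smul_mul_assoc, hdx, hdd, smul_zero, ← pow_succ, hxkd t, succ_nsmul]
          abel
      have hxB1 : φ B₁ = x + d := by
        rw [hddef, hDdef, map_sub, hxdef]
        abel
      have hkd : k • d = 0 := by
        have e1 : (x + d) ^ k = x ^ k + k • d := hbinom k
        have e2 : (x + d) ^ k = x ^ k := by
          rw [← hxB1, ← map_pow, hB, map_pow]
        rw [e2] at e1
        exact (left_eq_add.mp e1)
      have hpd : p • d = 0 := by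
        have h0 : φ (p • D) = 0 := by
          apply hφ0
          intro i j
          obtain ⟨e, he⟩ := ih i j
          refine ⟨e, ?_⟩
          rw [Matrix.smul_apply, nsmul_eq_mul, he]
          ring
        rw [map_nsmul] at h0
        exact h0
      have hco : Nat.gcd p k = 1 := (hp.coprime_iff_not_dvd.mpr hpk)
      have hbez : (p : ℤ) * Nat.gcdA p k + (k : ℤ) * Nat.gcdB p k = 1 := by
        have := Nat.gcd_eq_gcd_ab p k
        rw [hco] at this
        exact_mod_cast this.symm
      have hd0 : d = 0 := by
        calc d = ((p : ℤ) * Nat.gcdA p k + (k : ℤ) * Nat.gcdB p k) • d := by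
                rw [hbez, one_smul]
          _ = Nat.gcdA p k • ((p : ℤ) • d) + Nat.gcdB p k • ((k : ℤ) • d) := by
                rw [add_smul, mul_comm ((p : ℤ)), mul_comm ((k : ℤ)),
                  mul_smul, mul_smul]
          _ = 0 := by
                rw [natCast_zsmul, natCast_zsmul, hpd, hkd, smul_zero, smul_zero,
                  add_zero]
      have hfij : f (D i j) = 0 := by
        have h0 : φ D = 0 := hd0
        have := congrFun (congrFun h0 i) j
        simpa [hφdef, RingHom.mapMatrix_apply, Matrix.map_apply] using this
      exact Ideal.mem_span_singleton.mp (Ideal.Quotient.eq_zero_iff_mem.mp hfij)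
  -- conclude via separatedness
  have hD0 : D = 0 := by
    ext i j
    show D i j = 0
    apply hsep
    intro m
    cases m with
    | zero => simp
    | succ m => exact key m i j
  have hBeq : B₁ = B₂ := by
    have := sub_eq_zero.mp hD0
    exact this
  exact Units.ext hBeq
end

section
/- Define the ghost map w : GL_n(R) × Mat_n(R) → GL_n(R) × Mat_n(R) by w(a₀, a₁) = (a₀, a₀^{(p)} + p·a₁), and equip the source with the multiplication (a₀,a₁)∘(b₀,b₁) = (a₀b₀, a₀^{(p)}b₁ + a₁b₀^{(p)} + p a₁ b₁ + p^{−1}(a₀^{(p)}b₀^{(p)} − (a₀b₀)^{(p)})) and the target with componentwise multiplication (matrix multiplication in both factors). Then w is a homomorphism of monoids, and if R is p-torsion free then w is injective. -/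
open Matrix

/-- The ghost map `w(a₀,a₁) = (a₀, a₀^{(p)} + p·a₁)` is a homomorphism of monoids from
pairs with the jet-space multiplication `∘` to pairs with componentwise matrix
multiplication (with identity `(1,0) ↦ (1,1)`), and it is injective when `R` is
`p`-torsion free.  Here `D a₀ b₀` is the matrix with `p•D a₀ b₀ = a₀^{(p)}b₀^{(p)} − (a₀b₀)^{(p)}`. -/
theorem stmt_4 (p : ℕ) (hp : p.Prime) (R : Type*) [CommRing R]
    (htf : ∀ a : R, (p : R) * a = 0 → a = 0)
    (n : ℕ)
    (D : Matrix (Fin n) (Fin n) R → Matrix (Fin n) (Fin n) R → Matrix (Fin n) (Fin n) R)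
    (hD : ∀ a₀ b₀, (p : R) • D a₀ b₀ =
        a₀.map (· ^ p) * b₀.map (· ^ p) - (a₀ * b₀).map (· ^ p)) :
    (∀ a₀ a₁ b₀ b₁ : Matrix (Fin n) (Fin n) R,
        (a₀ * b₀).map (· ^ p) + (p : R) •
            (a₀.map (· ^ p) * b₁ + a₁ * b₀.map (· ^ p) + (p : R) • (a₁ * b₁) + D a₀ b₀) =
          (a₀.map (· ^ p) + (p : R) • a₁) * (b₀.map (· ^ p) + (p : R) • b₁)) ∧
    ((1 : Matrix (Fin n) (Fin n) R).map (· ^ p) +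
        (p : R) • (0 : Matrix (Fin n) (Fin n) R) = 1) ∧
    (∀ a₀ a₁ b₀ b₁ : Matrix (Fin n) (Fin n) R,
        a₀ = b₀ →
        a₀.map (· ^ p) + (p : R) • a₁ = b₀.map (· ^ p) + (p : R) • b₁ →
        a₁ = b₁) := by
  refine ⟨?_, ?_, ?_⟩
  · intro a₀ a₁ b₀ b₁
    have h := hD a₀ b₀
    rw [smul_add, smul_add, smul_add, h, add_mul, mul_add, mul_add]
    simp only [mul_smul_comm, smul_mul_assoc, smul_smul]
    abel
  · ext i j
    simp [Matrix.one_apply, apply_ite (· ^ p), hp.ne_zero]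
  · intro a₀ a₁ b₀ b₁ h0 h1
    subst h0
    have h2 : (p : R) • a₁ = (p : R) • b₁ := add_left_cancel h1
    ext i j
    have := congrFun (congrFun h2 i) j
    simp only [Matrix.smul_apply, smul_eq_mul] at this
    have : (p : R) * (a₁ i j - b₁ i j) = 0 := by ring_nf; linear_combination this
    exact sub_eq_zero.mp (htf _ this)
end

section
/- Let R be p-adically complete and p-torsion free, φ a lift of Frobenius on R. For α, β ∈ Mat_n(R) and r, s ≥ 1, define [α,β]_δ := ((1+p^r φ^s(α))(1+p^s φ^r(β))(1+p^r φ^s(α))^{−1}(1+p^s φ^r(β))^{−1} − 1)/p^{r+s}. Then [α,β]_δ ≡ α^{(p^s)}β^{(p^r)} − β^{(p^r)}α^{(p^s)} (mod p), where α^{(p^s)} denotes the matrix of p^s-th powers of entries. -/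
open Matrix

private lemma aux_map_one (p : ℕ) (R : Type*) [CommRing R] (n k : ℕ) (hk : 1 ≤ k)
    (M : Matrix (Fin n) (Fin n) R) :
    (Ideal.Quotient.mk (Ideal.span {(p:R)})).mapMatrix (1 + (p:R)^k • M) = 1 := by
  set f := Ideal.Quotient.mk (Ideal.span {(p:R)})
  have hfp : f ((p:R)^k) = 0 := by
    rw [map_pow, Ideal.Quotient.eq_zero_iff_mem.2 (Ideal.mem_span_singleton_self _),
      zero_pow (by omega)]
  rw [map_add, _root_.map_one]
  have : f.mapMatrix ((p:R)^k • M) = 0 := by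
    ext i j
    simp [RingHom.mapMatrix_apply, Matrix.map_apply, Matrix.smul_apply, smul_eq_mul,
      _root_.map_mul, hfp]
  rw [this, add_zero]

private lemma aux_det_unit (p : ℕ) (R : Type*) [CommRing R]
    (hcomp : IsAdicComplete (Ideal.span {(p : R)}) R)
    (n k : ℕ) (hk : 1 ≤ k) (M : Matrix (Fin n) (Fin n) R) :
    IsUnit (1 + (p:R)^k • M).det := by
  classical
  set f := Ideal.Quotient.mk (Ideal.span {(p:R)})
  have hF : f.mapMatrix (1 + (p:R)^k • M) = 1 := aux_map_one p R n k hk M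
  have h1 : f (1 + (p:R)^k • M).det = 1 := by
    rw [f.map_det, hF, det_one]
  have h2 : (p:R) ∣ (1 + (p:R)^k • M).det - 1 := by
    rw [← Ideal.mem_span_singleton, ← Ideal.Quotient.eq_zero_iff_mem]
    simp [f, h1]
  obtain ⟨c, hc⟩ := h2
  have hd : (1 + (p:R)^k • M).det = 1 + (p:R) * c := by linear_combination hc
  rw [hd]
  have hjac : (p:R) * c ∈ (⊥ : Ideal R).jacobson :=
    Ideal.mul_mem_right _ _
      (IsAdicComplete.le_jacobson_bot (I := Ideal.span {(p:R)})
        (Ideal.mem_span_singleton_self _))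
  rw [Ideal.mem_jacobson_bot] at hjac
  simpa [add_comm] using hjac 1

private lemma aux_iter (p : ℕ) (R : Type*) [CommRing R] (φ : R →+* R)
    (hφ : ∀ a : R, (p : R) ∣ (φ a - a ^ p)) (s : ℕ) (a : R) :
    (p : R) ∣ (⇑φ)^[s] a - a ^ p ^ s := by
  induction s with
  | zero => simp
  | succ t ih =>
    have h1 : (⇑φ)^[t+1] a = φ ((⇑φ)^[t] a) := Function.iterate_succ_apply' _ _ _
    have h2 : (p:R) ∣ ((⇑φ)^[t] a) ^ p - (a ^ p ^ t) ^ p :=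
      dvd_trans ih (sub_dvd_pow_sub_pow _ _ p)
    have h3 : (a ^ p ^ t) ^ p = a ^ p ^ (t+1) := by
      rw [← pow_mul, pow_succ]
    calc (p:R) ∣ (φ ((⇑φ)^[t] a) - ((⇑φ)^[t] a) ^ p)
          + (((⇑φ)^[t] a) ^ p - (a ^ p ^ t) ^ p) := dvd_add (hφ _) h2
      _ = (⇑φ)^[t+1] a - a ^ p ^ (t+1) := by rw [h1, ← h3]; ring

/-- The δ-bracket `[α,β]_δ`, defined by
`p^{r+s}•γ = (1+p^r φ^s(α))(1+p^s φ^r(β))(1+p^r φ^s(α))⁻¹(1+p^s φ^r(β))⁻¹ − 1`,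
exists (the two factors being invertible over the `p`-adically complete ring `R`) and
satisfies `[α,β]_δ ≡ α^{(p^s)}β^{(p^r)} − β^{(p^r)}α^{(p^s)} (mod p)` entrywise. -/
theorem stmt_5 (p : ℕ) (hp : p.Prime) (R : Type*) [CommRing R]
    (htf : ∀ a : R, (p : R) * a = 0 → a = 0)
    (hcomp : IsAdicComplete (Ideal.span {(p : R)}) R)
    (φ : R →+* R) (hφ : ∀ a : R, (p : R) ∣ (φ a - a ^ p))
    (n r s : ℕ) (hr : 1 ≤ r) (hs : 1 ≤ s)
    (α β : Matrix (Fin n) (Fin n) R) :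
    IsUnit (1 + (p : R) ^ r • α.map (⇑φ)^[s]) ∧
    IsUnit (1 + (p : R) ^ s • β.map (⇑φ)^[r]) ∧
    (∃ γ : Matrix (Fin n) (Fin n) R,
        (p : R) ^ (r + s) • γ =
          (1 + (p : R) ^ r • α.map (⇑φ)^[s]) * (1 + (p : R) ^ s • β.map (⇑φ)^[r]) *
            (1 + (p : R) ^ r • α.map (⇑φ)^[s])⁻¹ *
              (1 + (p : R) ^ s • β.map (⇑φ)^[r])⁻¹ - 1) ∧
    ∀ γ : Matrix (Fin n) (Fin n) R,
      (p : R) ^ (r + s) • γ =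
          (1 + (p : R) ^ r • α.map (⇑φ)^[s]) * (1 + (p : R) ^ s • β.map (⇑φ)^[r]) *
            (1 + (p : R) ^ r • α.map (⇑φ)^[s])⁻¹ *
              (1 + (p : R) ^ s • β.map (⇑φ)^[r])⁻¹ - 1 →
      ∀ i j, (p : R) ∣
        (γ - (α.map (· ^ p ^ s) * β.map (· ^ p ^ r) -
          β.map (· ^ p ^ r) * α.map (· ^ p ^ s))) i j := by
  classical
  set X := α.map (⇑φ)^[s] with hXdef
  set Y := β.map (⇑φ)^[r] with hYdef
  set A := 1 + (p:R)^r • X with hAdef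
  set B := 1 + (p:R)^s • Y with hBdef
  have hdetA : IsUnit A.det := aux_det_unit p R hcomp n r hr X
  have hdetB : IsUnit B.det := aux_det_unit p R hcomp n s hs Y
  have hAinv : A * A⁻¹ = 1 := mul_nonsing_inv _ hdetA
  have hBinv : B * B⁻¹ = 1 := mul_nonsing_inv _ hdetB
  -- commutator identity
  have hcomm : A * B - B * A = ((p:R)^(r+s)) • (X * Y - Y * X) := by
    rw [hAdef, hBdef]
    simp only [add_mul, mul_add, mul_one, one_mul, smul_mul_assoc, mul_smul_comm,
      smul_smul, smul_sub, pow_add]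
    module
  have hmain : A * B * A⁻¹ * B⁻¹ - 1 =
      ((p:R)^(r+s)) • ((X * Y - Y * X) * A⁻¹ * B⁻¹) := by
    have hBA : B * A * A⁻¹ * B⁻¹ = 1 := by
      rw [mul_assoc B A A⁻¹, hAinv, mul_one, hBinv]
    calc A * B * A⁻¹ * B⁻¹ - 1 = (A * B - B * A) * A⁻¹ * B⁻¹ := by
          rw [sub_mul, sub_mul, hBA]
      _ = ((p:R)^(r+s)) • ((X * Y - Y * X) * A⁻¹ * B⁻¹) := by
          rw [hcomm, smul_mul_assoc, smul_mul_assoc]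
  refine ⟨(isUnit_iff_isUnit_det _).2 hdetA, (isUnit_iff_isUnit_det _).2 hdetB,
    ⟨(X * Y - Y * X) * A⁻¹ * B⁻¹, hmain.symm⟩, ?_⟩
  intro γ hγ i j
  -- torsion-freeness for powers of p
  have htf' : ∀ (k : ℕ) (a : R), (p:R)^k * a = 0 → a = 0 := by
    intro k
    induction k with
    | zero => intro a ha; simpa using ha
    | succ t ih =>
      intro a ha
      apply ih
      apply htf
      rw [← mul_assoc, mul_comm (p:R) ((p:R)^t), ← pow_succ]
      exact ha
  -- γ is uniquely determined
  have hγ0 : γ = (X * Y - Y * X) * A⁻¹ * B⁻¹ := by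
    have h := hγ.trans hmain
    ext i' j'
    have : (p:R)^(r+s) * (γ i' j' - ((X * Y - Y * X) * A⁻¹ * B⁻¹) i' j') = 0 := by
      have := congrArg (fun M => M i' j') h
      simp only [Matrix.smul_apply, smul_eq_mul] at this
      rw [mul_sub, this, sub_self]
    exact sub_eq_zero.mp (htf' (r+s) _ this)
  subst hγ0
  -- pass to the quotient ring
  set f := Ideal.Quotient.mk (Ideal.span {(p:R)}) with hfdef
  set F : Matrix (Fin n) (Fin n) R →+* Matrix (Fin n) (Fin n) (R ⧸ Ideal.span {(p:R)}) := f.mapMatrix with hFdef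
  have hFA : F A = 1 := aux_map_one p R n r hr X
  have hFB : F B = 1 := aux_map_one p R n s hs Y
  have hFAi : F A⁻¹ = 1 := by
    have : F A * F A⁻¹ = 1 := by rw [← _root_.map_mul, hAinv, _root_.map_one]
    rwa [hFA, one_mul] at this
  have hFBi : F B⁻¹ = 1 := by
    have : F B * F B⁻¹ = 1 := by rw [← _root_.map_mul, hBinv, _root_.map_one]
    rwa [hFB, one_mul] at this
  have hFX : F X = F (α.map (· ^ p ^ s)) := by
    ext i' j'
    simp only [hFdef, RingHom.mapMatrix_apply, Matrix.map_apply, hXdef]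
    rw [Ideal.Quotient.mk_eq_mk_iff_sub_mem, Ideal.mem_span_singleton]
    exact aux_iter p R φ hφ s (α i' j')
  have hFY : F Y = F (β.map (· ^ p ^ r)) := by
    ext i' j'
    simp only [hFdef, RingHom.mapMatrix_apply, Matrix.map_apply, hYdef]
    rw [Ideal.Quotient.mk_eq_mk_iff_sub_mem, Ideal.mem_span_singleton]
    exact aux_iter p R φ hφ r (β i' j')
  have hkey : F ((X * Y - Y * X) * A⁻¹ * B⁻¹ -
      (α.map (· ^ p ^ s) * β.map (· ^ p ^ r) -
        β.map (· ^ p ^ r) * α.map (· ^ p ^ s))) = 0 := by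
    rw [map_sub, _root_.map_mul, _root_.map_mul, hFAi, hFBi, mul_one, mul_one,
      map_sub, _root_.map_mul, _root_.map_mul, hFX, hFY,
      map_sub, _root_.map_mul, _root_.map_mul, sub_self]
  rw [← Ideal.mem_span_singleton, ← Ideal.Quotient.eq_zero_iff_mem]
  have := congrArg (fun M => M i j) hkey
  simpa [hFdef, RingHom.mapMatrix_apply, Matrix.map_apply] using this
end

section
/- With the δ-bracket [α,β]_δ := ((1+p^r φ^s(α))(1+p^s φ^r(β))(1+p^r φ^s(α))^{−1}(1+p^s φ^r(β))^{−1} − 1)/p^{r+s} on matrices over a p-adically complete p-torsion-free ring R with lift of Frobenius φ, one has the antisymmetry congruence [α,β]_δ +_{δ,*} [β,α]_δ ≡ 0 (mod p), where a +_{δ,*} b := a + b + p^{r+s}ab. -/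
open Matrix

/-- In a ring complete for the `p`-adic topology, `1 + p^k • M` (with `k ≥ 1`)
is an invertible matrix. -/
lemma aux_unit_stmt6 {p : ℕ} {R : Type*} [CommRing R]
    (hcomp : IsAdicComplete (Ideal.span {(p : R)}) R)
    {n : ℕ} (M : Matrix (Fin n) (Fin n) R) (k : ℕ) (hk : 1 ≤ k) :
    IsUnit (1 + (p : R) ^ k • M).det := by
  set I : Ideal R := Ideal.span {(p : R)} with hI
  have hmem : (1 + (p : R) ^ k • M).det - 1 ∈ I := by
    have hmk : Ideal.Quotient.mk I ((1 + (p : R) ^ k • M).det) = 1 := by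
      rw [RingHom.map_det, RingHom.mapMatrix_apply]
      have : (1 + (p : R) ^ k • M).map (Ideal.Quotient.mk I) = 1 := by
        ext i j
        have hp0 : Ideal.Quotient.mk I (p : R) = 0 := by
          rw [Ideal.Quotient.eq_zero_iff_mem]
          exact Ideal.subset_span rfl
        simp [Matrix.map_apply, Matrix.add_apply, Matrix.one_apply, Matrix.smul_apply,
          _root_.map_mul, map_pow, hp0, zero_pow (show k ≠ 0 by omega)]
      rw [this, Matrix.det_one]
    have : Ideal.Quotient.mk I ((1 + (p : R) ^ k • M).det - 1) = 0 := by
      rw [_root_.map_sub, hmk, _root_.map_one, sub_self]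
    rwa [Ideal.Quotient.eq_zero_iff_mem] at this
  have hjac : I ≤ (⊥ : Ideal R).jacobson := IsAdicComplete.le_jacobson_bot I
  have := Ideal.mem_jacobson_bot.mp (hjac hmem) 1
  simpa using this

/-- Antisymmetry of the δ-bracket mod `p`:
`[α,β]_δ +_{δ,*} [β,α]_δ ≡ 0 (mod p)`, where `a +_{δ,*} b = a + b + p^{r+s}·a·b`
and the brackets are defined by their `p^{r+s}`-divisibility property. -/
theorem stmt_6 (p : ℕ) (hp : p.Prime) (R : Type*) [CommRing R]
    (htf : ∀ a : R, (p : R) * a = 0 → a = 0)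
    (hcomp : IsAdicComplete (Ideal.span {(p : R)}) R)
    (φ : R →+* R) (hφ : ∀ a : R, (p : R) ∣ (φ a - a ^ p))
    (n r s : ℕ) (hr : 1 ≤ r) (hs : 1 ≤ s)
    (α β γ₁ γ₂ : Matrix (Fin n) (Fin n) R)
    (h1 : (p : R) ^ (r + s) • γ₁ =
        (1 + (p : R) ^ r • α.map (⇑φ)^[s]) * (1 + (p : R) ^ s • β.map (⇑φ)^[r]) *
          (1 + (p : R) ^ r • α.map (⇑φ)^[s])⁻¹ *
            (1 + (p : R) ^ s • β.map (⇑φ)^[r])⁻¹ - 1)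
    (h2 : (p : R) ^ (s + r) • γ₂ =
        (1 + (p : R) ^ s • β.map (⇑φ)^[r]) * (1 + (p : R) ^ r • α.map (⇑φ)^[s]) *
          (1 + (p : R) ^ s • β.map (⇑φ)^[r])⁻¹ *
            (1 + (p : R) ^ r • α.map (⇑φ)^[s])⁻¹ - 1) :
    ∀ i j, (p : R) ∣ (γ₁ + γ₂ + (p : R) ^ (r + s) • (γ₁ * γ₂)) i j := by
  set A := 1 + (p : R) ^ r • α.map (⇑φ)^[s] with hAdef
  set B := 1 + (p : R) ^ s • β.map (⇑φ)^[r] with hBdef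
  have hA : IsUnit A.det := aux_unit_stmt6 hcomp _ r hr
  have hB : IsUnit B.det := aux_unit_stmt6 hcomp _ s hs
  have eA : A * A⁻¹ = 1 := Matrix.mul_nonsing_inv A hA
  have eA' : A⁻¹ * A = 1 := Matrix.nonsing_inv_mul A hA
  have eB : B * B⁻¹ = 1 := Matrix.mul_nonsing_inv B hB
  have eB' : B⁻¹ * B = 1 := Matrix.nonsing_inv_mul B hB
  have cancel : ∀ (M N C : Matrix (Fin n) (Fin n) R), M * N = 1 → M * (N * C) = C := by
    intro M N C h
    rw [← mul_assoc, h, one_mul]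
  have hXY : (A * B * A⁻¹ * B⁻¹) * (B * A * B⁻¹ * A⁻¹) = 1 := by
    simp only [mul_assoc]
    rw [cancel _ _ _ eB', cancel _ _ _ eA', cancel _ _ _ eB, eA]
  -- The whole expression is exactly zero.
  have key : (p : R) ^ (r + s) • (γ₁ + γ₂ + (p : R) ^ (r + s) • (γ₁ * γ₂)) = 0 := by
    rw [add_comm s r] at h2
    have expand : (p : R) ^ (r + s) • (γ₁ + γ₂ + (p : R) ^ (r + s) • (γ₁ * γ₂)) =
        ((p : R) ^ (r + s) • γ₁) + ((p : R) ^ (r + s) • γ₂) +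
          ((p : R) ^ (r + s) • γ₁) * ((p : R) ^ (r + s) • γ₂) := by
      rw [smul_add, smul_add, Matrix.smul_mul, Matrix.mul_smul, smul_smul]
    rw [expand, h1, h2]
    have : (A * B * A⁻¹ * B⁻¹ - 1) + (B * A * B⁻¹ * A⁻¹ - 1) +
        (A * B * A⁻¹ * B⁻¹ - 1) * (B * A * B⁻¹ * A⁻¹ - 1) =
        (A * B * A⁻¹ * B⁻¹) * (B * A * B⁻¹ * A⁻¹) - 1 := by
      noncomm_ring
    rw [this, hXY, sub_self]
  have hE : ∀ (k : ℕ) (x : R), (p : R) ^ k * x = 0 → x = 0 := by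
    intro k
    induction k with
    | zero => intro x h; simpa using h
    | succ m ih =>
      intro x h
      apply ih
      apply htf
      rw [← h]; ring
  intro i j
  have h0 : ((p : R) ^ (r + s) • (γ₁ + γ₂ + (p : R) ^ (r + s) • (γ₁ * γ₂))) i j = 0 := by
    rw [key]
    rfl
  rw [Matrix.smul_apply, smul_eq_mul] at h0
  rw [hE _ _ h0]
  exact dvd_zero _
end

section
/- Let R be p-adically complete and p-torsion free with lift of Frobenius φ, and define ex^r : Mat_n(R) → GL_n(R) by ex^r(a) = 1 + p^r φ^{−r}(a) (assuming φ is bijective on R). Then ex^r is an injective group homomorphism from (Mat_n(R), +_{δ,r}) with a +_{δ,r} b = a + b + p^r ab to GL_n(R), and ex^{r+s}([α,β]_δ) = [ex^r(α), ex^s(β)], where the right side is the group commutator aba^{−1}b^{−1} in GL_n(R). -/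
open Matrix

/-- The exponential `ex^r(a) = 1 + p^r·φ^{−r}(a)` (with `ψ = φ⁻¹` applied entrywise) is an
injective group homomorphism from `(Mat_n(R), +_{δ,r})` to `GL_n(R)`, and it intertwines the
δ-bracket with the group commutator: `ex^{r+s}([α,β]_δ) = [ex^r(α), ex^s(β)]`. -/
theorem stmt_7 (p : ℕ) (hp : p.Prime) (R : Type*) [CommRing R]
    (htf : ∀ a : R, (p : R) * a = 0 → a = 0)
    (hcomp : IsAdicComplete (Ideal.span {(p : R)}) R)
    (φ : R →+* R) (hφ : ∀ a : R, (p : R) ∣ (φ a - a ^ p))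
    (ψ : R → R) (hψ₁ : ∀ a : R, ψ (φ a) = a) (hψ₂ : ∀ a : R, φ (ψ a) = a)
    (n r s : ℕ) (hr : 1 ≤ r) (hs : 1 ≤ s) :
    (∀ a : Matrix (Fin n) (Fin n) R, IsUnit (1 + (p : R) ^ r • a.map ψ^[r])) ∧
    (∀ a b : Matrix (Fin n) (Fin n) R,
        1 + (p : R) ^ r • (a + b + (p : R) ^ r • (a * b)).map ψ^[r] =
          (1 + (p : R) ^ r • a.map ψ^[r]) * (1 + (p : R) ^ r • b.map ψ^[r])) ∧
    (∀ a b : Matrix (Fin n) (Fin n) R,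
        1 + (p : R) ^ r • a.map ψ^[r] = 1 + (p : R) ^ r • b.map ψ^[r] → a = b) ∧
    (∀ α β γ : Matrix (Fin n) (Fin n) R,
        (p : R) ^ (r + s) • γ =
            (1 + (p : R) ^ r • α.map (⇑φ)^[s]) * (1 + (p : R) ^ s • β.map (⇑φ)^[r]) *
              (1 + (p : R) ^ r • α.map (⇑φ)^[s])⁻¹ *
                (1 + (p : R) ^ s • β.map (⇑φ)^[r])⁻¹ - 1 →
        1 + (p : R) ^ (r + s) • γ.map ψ^[r + s] =
          (1 + (p : R) ^ r • α.map ψ^[r]) * (1 + (p : R) ^ s • β.map ψ^[s]) *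
            (1 + (p : R) ^ r • α.map ψ^[r])⁻¹ *
              (1 + (p : R) ^ s • β.map ψ^[s])⁻¹) := by
  classical
  -- φ is injective
  have hφinj : Function.Injective φ := Function.LeftInverse.injective hψ₁
  -- ψ is a ring hom
  have hψ_mul : ∀ a b : R, ψ (a * b) = ψ a * ψ b := fun a b => hφinj (by
    rw [_root_.map_mul, hψ₂, hψ₂, hψ₂])
  have hψ_add : ∀ a b : R, ψ (a + b) = ψ a + ψ b := fun a b => hφinj (by
    rw [_root_.map_add, hψ₂, hψ₂, hψ₂])
  have hψ_one : ψ 1 = 1 := hφinj (by rw [hψ₂, _root_.map_one])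
  have hψ_zero : ψ 0 = 0 := hφinj (by rw [hψ₂, _root_.map_zero])
  let ψh : R →+* R :=
    { toFun := ψ, map_one' := hψ_one, map_mul' := hψ_mul,
      map_zero' := hψ_zero, map_add' := hψ_add }
  have hψhcoe : ∀ k : ℕ, ⇑(ψh ^ k) = ψ^[k] := fun k => RingHom.coe_pow ψh k
  -- p^k torsion free
  have htfpow : ∀ (k : ℕ) (a : R), (p : R) ^ k * a = 0 → a = 0 := by
    intro k
    induction k with
    | zero => intro a h; simpa using h
    | succ m ih =>
      intro a h
      have : (p : R) ^ m * ((p : R) * a) = 0 := by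
        rw [← mul_assoc, ← pow_succ]; exact h
      exact htf a (ih _ this)
  -- units : 1 + p • M is a unit
  have hunit1 : ∀ M : Matrix (Fin n) (Fin n) R, IsUnit (1 + (p : R) • M) := by
    intro M
    rw [Matrix.isUnit_iff_isUnit_det]
    set I := Ideal.span {(p : R)} with hI
    have hmapdet : Ideal.Quotient.mk I ((1 + (p : R) • M).det) = 1 := by
      rw [RingHom.map_det]
      have hp0 : Ideal.Quotient.mk I ((p : R)) = 0 := by
        rw [Ideal.Quotient.eq_zero_iff_mem, hI]
        exact Ideal.mem_span_singleton_self _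
      have : (Ideal.Quotient.mk I).mapMatrix (1 + (p : R) • M) = 1 := by
        ext i j
        rw [RingHom.mapMatrix_apply]
        simp only [Matrix.map_apply, Matrix.add_apply, Matrix.smul_apply,
          smul_eq_mul, _root_.map_add, _root_.map_mul, hp0, zero_mul, add_zero]
        by_cases hij : i = j
        · subst hij; simp [Matrix.one_apply_eq]
        · simp [Matrix.one_apply_ne hij]
      rw [this, Matrix.det_one]
    have hmem : (1 + (p : R) • M).det - 1 ∈ I := by
      rw [← Ideal.Quotient.eq_zero_iff_mem, _root_.map_sub, hmapdet, _root_.map_one, sub_self]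
    rw [hI, Ideal.mem_span_singleton] at hmem
    obtain ⟨c, hc⟩ := hmem
    have hdet : (1 + (p : R) • M).det = (p : R) * c + 1 := by linear_combination hc
    rw [hdet]
    have hpj : (p : R) ∈ (⊥ : Ideal R).jacobson :=
      IsAdicComplete.le_jacobson_bot _ (Ideal.mem_span_singleton_self _)
    exact (Ideal.mem_jacobson_bot.mp hpj) c
  have hunit : ∀ (k : ℕ), 1 ≤ k → ∀ M : Matrix (Fin n) (Fin n) R,
      IsUnit (1 + (p : R) ^ k • M) := by
    intro k hk M
    obtain ⟨m, rfl⟩ := Nat.exists_eq_add_of_le hk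
    have : (p : R) ^ (1 + m) • M = (p : R) • ((p : R) ^ m • M) := by
      rw [smul_smul, pow_add, pow_one]
    rw [this]
    exact hunit1 _
  -- map by ψ^[k] as ring hom on matrices
  have hmapP : ∀ (k : ℕ) (c : R) (M : Matrix (Fin n) (Fin n) R),
      (c • M).map ψ^[k] = (ψ^[k] c) • M.map ψ^[k] := by
    intro k c M
    ext i j
    simp only [Matrix.map_apply, Matrix.smul_apply, smul_eq_mul, ← hψhcoe, _root_.map_mul]
  have hψp : ∀ k : ℕ, ψ^[k] ((p : R) ^ r) = (p : R) ^ r := by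
    intro k
    rw [← hψhcoe, _root_.map_pow, map_natCast]
  have hΦ : ∀ (k : ℕ) (M : Matrix (Fin n) (Fin n) R),
      M.map ψ^[k] = (ψh ^ k).mapMatrix M := by
    intro k M; rw [RingHom.mapMatrix_apply, hψhcoe]
  refine ⟨fun a => hunit r hr _, ?_, ?_, ?_⟩
  · -- homomorphism
    intro a b
    rw [hΦ, hΦ, hΦ, _root_.map_add, _root_.map_add]
    have h2 : (ψh ^ r).mapMatrix ((p : R) ^ r • (a * b)) =
        (p : R) ^ r • ((ψh ^ r).mapMatrix a * (ψh ^ r).mapMatrix b) := by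
      rw [← _root_.map_mul, RingHom.mapMatrix_apply, RingHom.mapMatrix_apply,
        hψhcoe, hmapP, hψp]
    rw [h2]
    set X := (ψh ^ r).mapMatrix a
    set Y := (ψh ^ r).mapMatrix b
    have hexp : ∀ U V : Matrix (Fin n) (Fin n) R,
        (1 + U) * (1 + V) = 1 + (U + V + U * V) := by
      intro U V; noncomm_ring
    rw [hexp, Matrix.smul_mul, Matrix.mul_smul, smul_smul]
    congr 1
    module
  · -- injectivity
    intro a b h
    have h2 : (p : R) ^ r • a.map ψ^[r] = (p : R) ^ r • b.map ψ^[r] :=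
      add_left_cancel h
    have h3 : a.map ψ^[r] = b.map ψ^[r] := by
      ext i j
      have := congrFun (congrFun h2 i) j
      simp only [Matrix.smul_apply, smul_eq_mul] at this
      have h4 : (p : R) ^ r * (a.map ψ^[r] i j - b.map ψ^[r] i j) = 0 := by
        rw [mul_sub, this, sub_self]
      exact sub_eq_zero.mp (htfpow r _ h4)
    ext i j
    have := congrFun (congrFun h3 i) j
    simp only [Matrix.map_apply] at this
    have hψiter : ∀ (k : ℕ) (x : R), (⇑φ)^[k] (ψ^[k] x) = x := by
      intro k
      induction k with
      | zero => intro x; rfl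
      | succ m ih =>
        intro x
        rw [Function.iterate_succ_apply', Function.iterate_succ_apply]
        rw [ih (ψ x), hψ₂]
    have := congrArg (⇑φ)^[r] this
    rwa [hψiter, hψiter] at this
  · -- commutator
    intro α β γ h
    have hψiter : ∀ (k : ℕ) (x : R), ψ^[k] ((⇑φ)^[k] x) = x := by
      intro k
      induction k with
      | zero => intro x; rfl
      | succ m ih =>
        intro x
        rw [Function.iterate_succ_apply, Function.iterate_succ_apply', hψ₁, ih]
    set A := 1 + (p : R) ^ r • α.map (⇑φ)^[s] with hA
    set B := 1 + (p : R) ^ s • β.map (⇑φ)^[r] with hB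
    have hAu : IsUnit A := hunit r hr _
    have hBu : IsUnit B := hunit s hs _
    have heq : 1 + (p : R) ^ (r + s) • γ = A * B * A⁻¹ * B⁻¹ := by
      rw [h]; abel
    -- the matrix ring hom
    let Ψ : Matrix (Fin n) (Fin n) R →+* Matrix (Fin n) (Fin n) R :=
      (ψh ^ (r + s)).mapMatrix
    have hΨ : ∀ M : Matrix (Fin n) (Fin n) R, Ψ M = M.map ψ^[r + s] := by
      intro M; rw [RingHom.mapMatrix_apply, hψhcoe]
    have hΨinv : ∀ M : Matrix (Fin n) (Fin n) R, IsUnit M → Ψ M⁻¹ = (Ψ M)⁻¹ := by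
      intro M hM
      have h1 : M * M⁻¹ = 1 :=
        Matrix.mul_nonsing_inv M ((Matrix.isUnit_iff_isUnit_det M).mp hM)
      have h2 : Ψ M * Ψ M⁻¹ = 1 := by rw [← _root_.map_mul, h1, _root_.map_one]
      exact (Matrix.inv_eq_right_inv h2).symm
    have hsmul : ∀ (c : ℕ) (M : Matrix (Fin n) (Fin n) R),
        Ψ ((p : R) ^ c • M) = (p : R) ^ c • Ψ M := by
      intro c M
      rw [hΨ, hΨ]
      ext i j
      simp only [Matrix.map_apply, Matrix.smul_apply, smul_eq_mul, ← hψhcoe,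
        _root_.map_mul, _root_.map_pow, map_natCast]
    have hΨA : Ψ A = 1 + (p : R) ^ r • α.map ψ^[r] := by
      rw [hA, _root_.map_add, _root_.map_one, hsmul, hΨ, Matrix.map_map]
      congr 2
      ext i j
      simp only [Matrix.map_apply, Function.comp_apply]
      rw [Function.iterate_add_apply, hψiter s, ]
    have hΨB : Ψ B = 1 + (p : R) ^ s • β.map ψ^[s] := by
      rw [hB, _root_.map_add, _root_.map_one, hsmul, hΨ, Matrix.map_map]
      congr 2
      ext i j
      simp only [Matrix.map_apply, Function.comp_apply]
      rw [add_comm r s, Function.iterate_add_apply, hψiter r]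
    have := congrArg Ψ heq
    rw [_root_.map_add, _root_.map_one, hsmul, hΨ, _root_.map_mul, _root_.map_mul, _root_.map_mul,
      hΨinv A hAu, hΨinv B hBu, hΨA, hΨB] at this
    exact this
end

section
/- Let R be a complete DVR with maximal ideal (p), p odd, fraction field K, and let q ∈ GL_n(R) with q^t = ±q and qq^t = 1, q^{(p)} = q (a split form). Define the involution τ on GL_n(R) by x^τ = q^{−1}(x^t)^{−1}q and the induced involution on g = Mat_n(R) (with group law a +_δ b = a+b+pab) by b^{L_δ(τ)} = −_δ(q^{−1} b^t q), where −_δ c is the +_δ-inverse. Let g⁺ = {b : b^{L_δ(τ)} = b} and g⁻ = {b : b^{L_δ(τ)} = −_δ b}. Then the map g⁺ × g⁻ → g, (b,c) ↦ b +_δ c, is a bijection. -/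
/-!
Under `x ↦ 1 + p • x` the law `a +_δ b` becomes matrix multiplication, `g⁺` becomes
`{B | σ B * B = 1}` and `g⁻` the `σ`-fixed points, where `σ X = q⁻¹ Xᵀ q`. A decomposition
`A = B C` is therefore a polar decomposition: necessarily `C * C = σ A * A`, and conversely
`B := A C⁻¹` works once `C` is a `σ`-fixed square root of `σ A * A`. Since `2` is a unit,
`(1 + p ℓ)² = 1 + p m` says that `ℓ` is a fixed point of `ℓ ↦ ½ (m - p ℓ²)`, a `p`-adic
contraction; so square roots exist and are unique, and uniqueness makes the root `σ`-fixed.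
-/

open Matrix

section AdicContraction

variable {R M : Type*} [CommRing R] [AddCommGroup M] [Module R M]

def IsAdicContraction (I : Ideal R) (T : M → M) : Prop :=
  ∀ (k : ℕ) (x y : M), x ≡ y [SMOD I ^ k • (⊤ : Submodule R M)] →
    T x ≡ T y [SMOD I ^ (k + 1) • (⊤ : Submodule R M)]

variable {I : Ideal R} {T : M → M}

theorem IsAdicContraction.eq_of_isFixedPt [IsHausdorff I M] (hT : IsAdicContraction I T)
    {x y : M} (hx : Function.IsFixedPt T x) (hy : Function.IsFixedPt T y) : x = y := by
  refine (IsHausdorff.eq_iff_smodEq (I := I)).mpr fun k => ?_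
  induction k with
  | zero => simp [SModEq.top]
  | succ k ih => simpa only [hx.eq, hy.eq] using hT k x y ih

theorem IsAdicContraction.exists_isFixedPt [IsHausdorff I M] [IsPrecomplete I M]
    (hT : IsAdicContraction I T) : ∃ x, Function.IsFixedPt T x := by
  let f : ℕ → M := fun k => T^[k] 0
  have hstep (k : ℕ) : f k ≡ f (k + 1) [SMOD I ^ k • (⊤ : Submodule R M)] := by
    induction k with
    | zero => simp [SModEq.top]
    | succ k ih => simpa only [f, Function.iterate_succ_apply'] using hT k _ _ ih
  have hcauchy {k l : ℕ} (hkl : k ≤ l) :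
      f k ≡ f l [SMOD I ^ k • (⊤ : Submodule R M)] := by
    induction l, hkl using Nat.le_induction with
    | base => rfl
    | succ l hkl ih =>
      exact ih.trans ((hstep l).mono (Submodule.smul_mono_left (Ideal.pow_le_pow_right hkl)))
  obtain ⟨x, hx⟩ := IsPrecomplete.prec' f hcauchy
  refine ⟨x, (IsHausdorff.eq_iff_smodEq (I := I)).mpr fun k => ?_⟩
  have hTx : T x ≡ f (k + 1) [SMOD I ^ (k + 1) • (⊤ : Submodule R M)] := by
    simpa only [f, Function.iterate_succ_apply'] using hT k _ _ (hx k).symm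
  exact (hTx.trans (hx (k + 1))).mono
    (Submodule.smul_mono_left (Ideal.pow_le_pow_right k.le_succ))

theorem IsAdicContraction.existsUnique_isFixedPt [IsHausdorff I M] [IsPrecomplete I M]
    (hT : IsAdicContraction I T) : ∃! x, Function.IsFixedPt T x :=
  let ⟨x, hx⟩ := hT.exists_isFixedPt
  ⟨x, hx, fun _ hy => hT.eq_of_isFixedPt hy hx⟩

theorem smodEq_span_singleton_pow_iff (r : R) (k : ℕ) (x y : M) :
    x ≡ y [SMOD Ideal.span {r} ^ k • (⊤ : Submodule R M)] ↔ ∃ z, x = y + r ^ k • z := by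
  simp only [SModEq.sub_mem, Ideal.span_singleton_pow, Submodule.ideal_span_singleton_smul,
    Submodule.mem_smul_pointwise_iff_exists, Submodule.mem_top, true_and, eq_comm (b := x - y),
    sub_eq_iff_eq_add']

end AdicContraction

section Pi

variable {R M ι : Type*} [CommRing R] [AddCommGroup M] [Module R M] {J : Ideal R}

theorem SModEq.pi_apply {x y : ι → M} (h : x ≡ y [SMOD J • (⊤ : Submodule R (ι → M))])
    (i : ι) : x i ≡ y i [SMOD J • (⊤ : Submodule R M)] :=
  (h.map (LinearMap.proj i)).mono <| by
    rw [Submodule.map_smul'']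
    exact Submodule.smul_mono le_rfl le_top

theorem SModEq.pi [Finite ι] {x y : ι → M}
    (h : ∀ i, x i ≡ y i [SMOD J • (⊤ : Submodule R M)]) :
    x ≡ y [SMOD J • (⊤ : Submodule R (ι → M))] := by
  classical
  have := Fintype.ofFinite ι
  rw [← Finset.univ_sum_single x, ← Finset.univ_sum_single y]
  refine SModEq.sum fun i _ => ((h i).map (LinearMap.single R (fun _ => M) i)).mono ?_
  rw [Submodule.map_smul'']
  exact Submodule.smul_mono le_rfl le_top

variable (J)

instance IsHausdorff.pi [IsHausdorff J M] : IsHausdorff J (ι → M) :=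
  ⟨fun x hx => _root_.funext fun i =>
    IsHausdorff.haus' (I := J) (x i) fun k => (hx k).pi_apply i⟩

instance IsPrecomplete.pi [Finite ι] [IsPrecomplete J M] : IsPrecomplete J (ι → M) := by
  refine ⟨fun f hf => ?_⟩
  choose x hx using fun i =>
    IsPrecomplete.prec' (I := J) (fun k => f k i) fun hkl => (hf hkl).pi_apply i
  exact ⟨x, fun k => SModEq.pi fun i => hx i k⟩

instance Matrix.isHausdorff {m n : Type*} [IsHausdorff J M] : IsHausdorff J (Matrix m n M) :=
  inferInstanceAs (IsHausdorff J (m → n → M))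

instance Matrix.isPrecomplete {m n : Type*} [Finite m] [Finite n] [IsPrecomplete J M] :
    IsPrecomplete J (Matrix m n M) :=
  inferInstanceAs (IsPrecomplete J (m → n → M))

end Pi

section AntiInvolution

variable {M : Type*} [Monoid M] {σ : M → M}

theorem map_one_of_anti_involutive (hmul : ∀ x y, σ (x * y) = σ y * σ x)
    (hinv : ∀ x, σ (σ x) = x) : σ 1 = 1 := by
  simpa [hinv] using (hmul (σ 1) 1).symm

theorem anti_mul_self_of_isometry (hmul : ∀ x y, σ (x * y) = σ y * σ x) {B C : M}
    (hB : σ B * B = 1) (hC : σ C = C) : σ (B * C) * (B * C) = C * C := by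
  rw [hmul, hC, mul_assoc, ← mul_assoc (σ B), hB, one_mul]

theorem isometry_mul_of_anti_mul_self (hmul : ∀ x y, σ (x * y) = σ y * σ x)
    (hinv : ∀ x, σ (σ x) = x) {U C C' : M} (hC : σ C = C) (hCC' : C * C' = 1)
    (hU : σ U * U = C * C) : σ (U * C') * (U * C') = 1 := by
  calc σ (U * C') * (U * C') = σ C' * (σ U * U) * C' := by simp only [hmul, mul_assoc]
    _ = σ C' * σ C := by rw [hU, hC, mul_assoc, mul_assoc, hCC', mul_one]
    _ = 1 := by rw [← hmul, hCC', map_one_of_anti_involutive hmul hinv]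

end AntiInvolution

section DeltaGroup

variable {R A : Type*} [CommRing R] [Ring A] [Algebra R A] (P : R)

theorem one_add_smul_mul_one_add_smul (x y : A) :
    (1 + P • x) * (1 + P • y) = 1 + P • (x + y + P • (x * y)) := by
  simp only [mul_add, add_mul, mul_one, one_mul, smul_add, smul_smul, mul_smul_comm,
    smul_mul_assoc]
  abel

theorem one_add_smul_injective (hP : IsSMulRegular A P) :
    Function.Injective fun x : A => 1 + P • x :=
  fun _ _ h => hP (add_left_cancel h)

theorem isAdicContraction_sqrtStep [Invertible (2 : R)] (m : A) :
    IsAdicContraction (Ideal.span {P}) fun ℓ : A => ⅟(2 : R) • (m - P • (ℓ * ℓ)) := by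
  intro k x y hxy
  obtain ⟨z, rfl⟩ := (smodEq_span_singleton_pow_iff P k x y).mp hxy
  refine (smodEq_span_singleton_pow_iff P (k + 1) _ _).mpr
    ⟨-⅟(2 : R) • (z * y + y * z + P ^ k • (z * z)), ?_⟩
  simp only [add_mul, mul_add, smul_mul_assoc, mul_smul_comm, smul_add, smul_sub, smul_smul,
    pow_succ]
  module

theorem existsUnique_one_add_smul_mul_self_eq [Invertible (2 : R)]
    [IsHausdorff (Ideal.span {P}) A] [IsPrecomplete (Ideal.span {P}) A] (hP : IsSMulRegular A P)
    (m : A) : ∃! ℓ : A, (1 + P • ℓ) * (1 + P • ℓ) = 1 + P • m := by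
  have key (ℓ : A) : (1 + P • ℓ) * (1 + P • ℓ) = 1 + P • m ↔
      Function.IsFixedPt (fun ℓ : A => ⅟(2 : R) • (m - P • (ℓ * ℓ))) ℓ := by
    rw [one_add_smul_mul_one_add_smul, (one_add_smul_injective P hP).eq_iff, Function.IsFixedPt,
      invOf_smul_eq_iff, two_smul, sub_eq_iff_eq_add]
    exact eq_comm
  simpa only [key] using (isAdicContraction_sqrtStep P m).existsUnique_isFixedPt

def IsDeltaInverse (neg : A → A) : Prop :=
  ∀ a, a + neg a + P • (a * neg a) = 0 ∧ neg a + a + P • (neg a * a) = 0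

variable {P} {neg : A → A}

theorem one_add_smul_mul_neg (hneg : IsDeltaInverse P neg) (x : A) :
    (1 + P • x) * (1 + P • neg x) = 1 := by
  rw [one_add_smul_mul_one_add_smul, (hneg x).1, smul_zero, add_zero]

theorem one_add_smul_neg_mul (hneg : IsDeltaInverse P neg) (x : A) :
    (1 + P • neg x) * (1 + P • x) = 1 := by
  rw [one_add_smul_mul_one_add_smul, (hneg x).2, smul_zero, add_zero]

theorem neg_eq_iff_one_add_smul_mul_eq_one (hP : IsSMulRegular A P)
    (hneg : IsDeltaInverse P neg) {x y : A} :
    neg y = x ↔ (1 + P • y) * (1 + P • x) = 1 := by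
  refine ⟨fun h => h ▸ one_add_smul_mul_neg hneg y, fun h => ?_⟩
  refine (one_add_smul_injective P hP).eq_iff.mp ?_
  calc 1 + P • neg y = (1 + P • neg y) * ((1 + P • y) * (1 + P • x)) := by rw [h, mul_one]
    _ = 1 + P • x := by rw [← mul_assoc, one_add_smul_neg_mul hneg, one_mul]

theorem neg_injective_of_isSMulRegular (hP : IsSMulRegular A P) (hneg : IsDeltaInverse P neg) :
    Function.Injective neg := by
  intro x y hxy
  have h := (neg_eq_iff_one_add_smul_mul_eq_one hP hneg).mp hxy
  refine (one_add_smul_injective P hP).eq_iff.mp ?_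
  calc 1 + P • x = (1 + P • x) * ((1 + P • neg y) * (1 + P • y)) := by
        rw [one_add_smul_neg_mul hneg, mul_one]
    _ = 1 + P • y := by rw [← mul_assoc, h, one_mul]

theorem existsUnique_deltaAdd_decomposition [Invertible (2 : R)]
    [IsHausdorff (Ideal.span {P}) A] [IsPrecomplete (Ideal.span {P}) A]
    (hP : IsSMulRegular A P) (σ : A →ₗ[R] A) (hσmul : ∀ x y, σ (x * y) = σ y * σ x)
    (hσσ : ∀ x, σ (σ x) = x) (hneg : IsDeltaInverse P neg) (a : A) :
    ∃! bc : A × A, neg (σ bc.1) = bc.1 ∧ neg (σ bc.2) = neg bc.2 ∧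
      bc.1 + bc.2 + P • (bc.1 * bc.2) = a := by
  have hσ (x : A) : σ (1 + P • x) = 1 + P • σ x := by
    rw [map_add, map_smul, map_one_of_anti_involutive hσmul hσσ]
  have hplus (b : A) : neg (σ b) = b ↔ σ (1 + P • b) * (1 + P • b) = 1 := by
    rw [hσ]; exact neg_eq_iff_one_add_smul_mul_eq_one hP hneg
  have hminus (c : A) : neg (σ c) = neg c ↔ σ c = c :=
    (neg_injective_of_isSMulRegular hP hneg).eq_iff
  have hsum (b c : A) :
      b + c + P • (b * c) = a ↔ (1 + P • b) * (1 + P • c) = 1 + P • a := by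
    rw [one_add_smul_mul_one_add_smul, (one_add_smul_injective P hP).eq_iff]
  simp only [hplus, hminus, hsum]
  obtain ⟨ℓ, hℓ, hℓ_unique⟩ :=
    existsUnique_one_add_smul_mul_self_eq P hP (σ a + a + P • (σ a * a))
  rw [← one_add_smul_mul_one_add_smul, ← hσ] at hℓ hℓ_unique
  have hσℓ : σ ℓ = ℓ :=
    hℓ_unique _ (by beta_reduce; rw [← hσ, ← hσmul, hℓ, hσmul, hσσ])
  refine ⟨(a + neg ℓ + P • (a * neg ℓ), ℓ), ⟨?_, hσℓ, ?_⟩, ?_⟩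
  · rw [← one_add_smul_mul_one_add_smul]
    exact isometry_mul_of_anti_mul_self hσmul hσσ (by rw [hσ, hσℓ])
      (one_add_smul_mul_neg hneg ℓ) hℓ.symm
  · rw [← one_add_smul_mul_one_add_smul, mul_assoc, one_add_smul_neg_mul hneg, mul_one]
  · rintro ⟨b, c⟩ ⟨hb, hc, hbc⟩
    obtain rfl : c = ℓ := hℓ_unique c (by
      beta_reduce; rw [← hbc, anti_mul_self_of_isometry hσmul hb (by rw [hσ, hc])])
    refine Prod.ext ((one_add_smul_injective P hP).eq_iff.mp ?_) rfl
    rw [← one_add_smul_mul_one_add_smul, ← hbc, mul_assoc, one_add_smul_mul_neg hneg,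
      mul_one]

end DeltaGroup

theorem IsLocalRing.isUnit_two_of_odd {R : Type*} [CommRing R] [IsLocalRing R] {p : ℕ}
    (hodd : Odd p) (hp : ¬IsUnit (p : R)) : IsUnit (2 : R) := by
  obtain ⟨t, rfl⟩ := hodd
  have h := IsLocalRing.isUnit_or_isUnit_of_add_one (a := ((2 * t + 1 : ℕ) : R)) (b := -(2 * t))
    (by push_cast; ring)
  exact isUnit_of_mul_isUnit_left (IsUnit.neg_iff _ |>.mp (h.resolve_left hp))

namespace Matrix

variable {n R : Type*} [Fintype n] [DecidableEq n] [CommRing R]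

/-- The adjoint for the bilinear form `(x, y) ↦ xᵀ q y`; the paper's involution on `g` is
`b ↦ −_δ (formAdjoint q b)`. -/
noncomputable def formAdjoint (q : Matrix n n R) : Matrix n n R →ₗ[R] Matrix n n R where
  toFun X := q⁻¹ * Xᵀ * q
  map_add' X Y := by rw [transpose_add, Matrix.mul_add, Matrix.add_mul]
  map_smul' r X := by rw [transpose_smul, Matrix.mul_smul, Matrix.smul_mul]; rfl

variable {q : Matrix n n R}

theorem formAdjoint_mul (hq : IsUnit q.det) (X Y : Matrix n n R) :
    formAdjoint q (X * Y) = formAdjoint q Y * formAdjoint q X := by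
  change q⁻¹ * (X * Y)ᵀ * q = q⁻¹ * Yᵀ * q * (q⁻¹ * Xᵀ * q)
  rw [transpose_mul]
  simp only [Matrix.mul_assoc, mul_nonsing_inv_cancel_left _ _ hq]

theorem formAdjoint_formAdjoint (hq : IsUnit q.det) {ε : R} (hqt : qᵀ = ε • q)
    (hε : ε * ε = 1) (X : Matrix n n R) : formAdjoint q (formAdjoint q X) = X := by
  have h₁ : q⁻¹ * qᵀ = ε • 1 := by rw [hqt, Matrix.mul_smul, nonsing_inv_mul q hq]
  have h₂ : q⁻¹ᵀ * q = ε • 1 := by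
    simpa using congrArg transpose (show qᵀ * q⁻¹ = ε • 1 by
      rw [hqt, Matrix.smul_mul, mul_nonsing_inv q hq])
  change q⁻¹ * (q⁻¹ * Xᵀ * q)ᵀ * q = X
  simp only [transpose_mul, transpose_transpose, ← Matrix.mul_assoc, h₁]
  rw [Matrix.mul_assoc _ _ q, h₂]
  simp [smul_smul, hε]

end Matrix

theorem stmt_13_general (p : ℕ) (hodd : Odd p)
    (R : Type*) [CommRing R] [IsDomain R] [IsDiscreteValuationRing R]
    (hirr : Irreducible (p : R))
    (hcomp : IsAdicComplete (Ideal.span {(p : R)}) R)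
    (n : ℕ) (ε : R) (hε : ε = 1 ∨ ε = -1)
    (q : Matrix (Fin n) (Fin n) R)
    (hqt : qᵀ = ε • q) (hqq : q * qᵀ = 1)
    (neg : Matrix (Fin n) (Fin n) R → Matrix (Fin n) (Fin n) R)
    (hneg : ∀ a, a + neg a + (p : R) • (a * neg a) = 0 ∧
        neg a + a + (p : R) • (neg a * a) = 0) :
    ∀ a : Matrix (Fin n) (Fin n) R,
      ∃! bc : Matrix (Fin n) (Fin n) R × Matrix (Fin n) (Fin n) R,
        neg (q⁻¹ * bc.1ᵀ * q) = bc.1 ∧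
        neg (q⁻¹ * bc.2ᵀ * q) = neg bc.2 ∧
        bc.1 + bc.2 + (p : R) • (bc.1 * bc.2) = a := by
  have hq : IsUnit q.det := isUnit_det_of_right_inverse hqq
  have hε2 : ε * ε = 1 := by rcases hε with rfl | rfl <;> norm_num
  let : Invertible (2 : R) := (IsLocalRing.isUnit_two_of_odd hodd hirr.not_isUnit).invertible
  exact existsUnique_deltaAdd_decomposition (.of_ne_zero hirr.ne_zero) (formAdjoint q)
    (formAdjoint_mul hq) (formAdjoint_formAdjoint hq hqt hε2) hneg

/-- Cartan decomposition for the δ-Lie algebra (Proposition 5.5): for a split form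
`q` (`qᵗ = ±q`, `qqᵗ = 1`, `q^{(p)} = q`) over a complete DVR with maximal ideal `(p)`,
every matrix `a` has a unique decomposition `a = b +_δ c` with `b ∈ g⁺` and `c ∈ g⁻` for
the involution `b ↦ −_δ(q⁻¹ bᵗ q)`; here `neg` denotes the `+_δ`-inverse. -/
theorem stmt_13 (p : ℕ) (hp : p.Prime) (hodd : Odd p)
    (R : Type*) [CommRing R] [IsDomain R] [IsDiscreteValuationRing R]
    (hirr : Irreducible (p : R))
    (hcomp : IsAdicComplete (Ideal.span {(p : R)}) R)
    (n : ℕ) (ε : R) (hε : ε = 1 ∨ ε = -1)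
    (q : Matrix (Fin n) (Fin n) R)
    (hqt : qᵀ = ε • q) (hqq : q * qᵀ = 1) (hqp : q.map (· ^ p) = q)
    (neg : Matrix (Fin n) (Fin n) R → Matrix (Fin n) (Fin n) R)
    (hneg : ∀ a, a + neg a + (p : R) • (a * neg a) = 0 ∧
        neg a + a + (p : R) • (neg a * a) = 0) :
    ∀ a : Matrix (Fin n) (Fin n) R,
      ∃! bc : Matrix (Fin n) (Fin n) R × Matrix (Fin n) (Fin n) R,
        neg (q⁻¹ * bc.1ᵀ * q) = bc.1 ∧
        neg (q⁻¹ * bc.2ᵀ * q) = neg bc.2 ∧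
        bc.1 + bc.2 + (p : R) • (bc.1 * bc.2) = a :=
  stmt_13_general p hodd R hirr hcomp n ε hε q hqt hqq neg hneg
end

section
/- Let V be a finite-dimensional vector space over a field R equipped with a derivation δ (R a commutative Q-algebra or field with derivation), B : V × V → R a non-degenerate bilinear form that is symmetric or antisymmetric, and ∇₀ : V → V a connection (additive map with ∇₀(av) = δ(a)v + a∇₀v). Then there exists exactly one connection ∇ : V → V such that (a) δ(B(u,v)) = B(∇u, v) + B(u, ∇v) for all u,v ∈ V (B-horizontality), and (b) B(Λu, v) = B(u, Λv) for Λ = ∇ − ∇₀ (B-symmetry of the difference). Explicitly ∇ = (1/2)∇₀ + (1/2)(B*)^{−1} ∘ ∇₀* ∘ B*, where B* : V → V* is u ↦ B(u,−) and ∇₀* is the dual connection determined by δ⟨u*, v⟩ = ⟨∇₀* u*, v⟩ + ⟨u*, ∇₀ v⟩. -/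
/-! Any `∇` satisfying (a) and (b) has `2 B(u, ∇v) = δ B(u,v) − B(∇₀u, v) + B(u, ∇₀v)`: add (a)
to (b) written as `B(∇u, v) − B(u, ∇v) = B(∇₀u, v) − B(u, ∇₀v)`. The right-hand side is
`R`-linear in `u`, so by non-degeneracy it determines `∇v`, which gives uniqueness. Conversely,
the map so defined is a connection, and since `B` is `ε`-symmetric with `ε = ±1` (a constant for
`δ`), swapping the arguments shows `B(∇u, v) = δ B(u,v) − B(u, ∇v)`, from which (a) and (b)
follow. -/

namespace ChernConnection

variable {R V : Type*} [Field R] [AddCommGroup V] [Module R V]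

/-- The value of `B u (∇ v)` for the Chern connection `∇`. -/
def chernPairing (B : LinearMap.BilinForm R V) (δ : R → R) (nabla0 : V → V) (u v : V) : R :=
  2⁻¹ * (δ (B u v) - B (nabla0 u) v + B u (nabla0 v))

variable {B : LinearMap.BilinForm R V} {δ : R → R} {nabla0 : V → V}

theorem apply_right_eq_chernPairing (h2 : (2 : R) ≠ 0) {nabla : V → V}
    (hhor : ∀ u v, δ (B u v) = B (nabla u) v + B u (nabla v))
    (hsymm : ∀ u v, B (nabla u - nabla0 u) v = B u (nabla v - nabla0 v)) (u v : V) :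
    B u (nabla v) = chernPairing B δ nabla0 u v := by
  have hs := hsymm u v
  rw [map_sub, LinearMap.sub_apply, map_sub] at hs
  rw [chernPairing, eq_inv_mul_iff_mul_eq₀ h2]
  linear_combination -hhor u v - hs

theorem chernPairing_add_left (hδadd : ∀ a b, δ (a + b) = δ a + δ b)
    (h0add : ∀ u v, nabla0 (u + v) = nabla0 u + nabla0 v) (u u' v : V) :
    chernPairing B δ nabla0 (u + u') v =
      chernPairing B δ nabla0 u v + chernPairing B δ nabla0 u' v := by
  simp only [chernPairing, map_add, LinearMap.add_apply, hδadd, h0add]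
  ring

theorem chernPairing_smul_left (hδmul : ∀ a b, δ (a * b) = a * δ b + δ a * b)
    (h0smul : ∀ (a : R) (v : V), nabla0 (a • v) = δ a • v + a • nabla0 v) (a : R) (u v : V) :
    chernPairing B δ nabla0 (a • u) v = a * chernPairing B δ nabla0 u v := by
  simp only [chernPairing, map_add, map_smul, LinearMap.add_apply, LinearMap.smul_apply,
    smul_eq_mul, hδmul, h0smul]
  ring

theorem chernPairing_add_right (hδadd : ∀ a b, δ (a + b) = δ a + δ b)
    (h0add : ∀ u v, nabla0 (u + v) = nabla0 u + nabla0 v) (u v v' : V) :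
    chernPairing B δ nabla0 u (v + v') =
      chernPairing B δ nabla0 u v + chernPairing B δ nabla0 u v' := by
  simp only [chernPairing, map_add, hδadd, h0add]
  ring

theorem chernPairing_smul_right (h2 : (2 : R) ≠ 0) (hδmul : ∀ a b, δ (a * b) = a * δ b + δ a * b)
    (h0smul : ∀ (a : R) (v : V), nabla0 (a • v) = δ a • v + a • nabla0 v) (a : R) (u v : V) :
    chernPairing B δ nabla0 u (a • v) = δ a * B u v + a * chernPairing B δ nabla0 u v := by
  simp only [chernPairing, map_add, map_smul, smul_eq_mul, hδmul, h0smul]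
  field_simp
  ring

theorem exists_sign_of_symm_or_antisymm (hδadd : ∀ a b, δ (a + b) = δ a + δ b)
    (hB : (∀ u v, B u v = B v u) ∨ (∀ u v, B u v = - B v u)) :
    ∃ ε : R, ε * ε = 1 ∧ (∀ a, δ (ε * a) = ε * δ a) ∧ ∀ u v, B u v = ε * B v u := by
  rcases hB with hB | hB
  · exact ⟨1, one_mul 1, by simp, by simpa using hB⟩
  · refine ⟨-1, by norm_num, fun a => ?_, by simpa using hB⟩
    simpa using (AddMonoidHom.mk' δ hδadd).map_neg a

theorem chernPairing_swap (h2 : (2 : R) ≠ 0) {ε : R} (hε : ε * ε = 1)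
    (hδε : ∀ a, δ (ε * a) = ε * δ a) (hBε : ∀ u v, B u v = ε * B v u) (u v : V) :
    ε * chernPairing B δ nabla0 v u = δ (B u v) - chernPairing B δ nabla0 u v := by
  rw [chernPairing, chernPairing, hBε v u, hBε (nabla0 v) u, hBε v (nabla0 u), hδε]
  field_simp
  linear_combination (δ (B u v) - B u (nabla0 v) + B (nabla0 u) v) * hε

theorem _root_.LinearMap.SeparatingRight.eq_of_forall_apply_eq (hB : B.SeparatingRight) {x y : V}
    (h : ∀ u, B u x = B u y) : x = y :=
  sub_eq_zero.mp <| hB _ fun u => by rw [map_sub, h, sub_self]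

theorem exists_apply_right_eq_chernPairing [FiniteDimensional R V] (hB : B.Nondegenerate)
    (hδadd : ∀ a b, δ (a + b) = δ a + δ b) (hδmul : ∀ a b, δ (a * b) = a * δ b + δ a * b)
    (h0add : ∀ u v, nabla0 (u + v) = nabla0 u + nabla0 v)
    (h0smul : ∀ (a : R) (v : V), nabla0 (a • v) = δ a • v + a • nabla0 v) :
    ∃ nabla : V → V, ∀ u v, B u (nabla v) = chernPairing B δ nabla0 u v := by
  let f : V → Module.Dual R V := fun v =>
    { toFun := fun u => chernPairing B δ nabla0 u v
      map_add' := fun u u' => chernPairing_add_left hδadd h0add u u' v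
      map_smul' := fun a u => chernPairing_smul_left hδmul h0smul a u v }
  exact ⟨fun v => (B.flip.toDual hB.flip).symm (f v), fun u v =>
    LinearMap.BilinForm.apply_toDual_symm_apply (B := B.flip) (f v) u⟩

section OfApplyRightEq

variable {nabla : V → V}

theorem map_add_of_apply_right_eq (hB : B.SeparatingRight)
    (hδadd : ∀ a b, δ (a + b) = δ a + δ b) (h0add : ∀ u v, nabla0 (u + v) = nabla0 u + nabla0 v)
    (hrep : ∀ u v, B u (nabla v) = chernPairing B δ nabla0 u v) (v v' : V) :
    nabla (v + v') = nabla v + nabla v' :=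
  hB.eq_of_forall_apply_eq fun u => by
    rw [map_add, hrep, hrep, hrep, chernPairing_add_right hδadd h0add]

theorem map_smul_of_apply_right_eq (hB : B.SeparatingRight) (h2 : (2 : R) ≠ 0)
    (hδmul : ∀ a b, δ (a * b) = a * δ b + δ a * b)
    (h0smul : ∀ (a : R) (v : V), nabla0 (a • v) = δ a • v + a • nabla0 v)
    (hrep : ∀ u v, B u (nabla v) = chernPairing B δ nabla0 u v) (a : R) (v : V) :
    nabla (a • v) = δ a • v + a • nabla v :=
  hB.eq_of_forall_apply_eq fun u => by
    rw [map_add, map_smul, map_smul, smul_eq_mul, smul_eq_mul, hrep, hrep,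
      chernPairing_smul_right h2 hδmul h0smul]

theorem apply_left_eq_of_apply_right_eq (h2 : (2 : R) ≠ 0) {ε : R} (hε : ε * ε = 1)
    (hδε : ∀ a, δ (ε * a) = ε * δ a) (hBε : ∀ u v, B u v = ε * B v u)
    (hrep : ∀ u v, B u (nabla v) = chernPairing B δ nabla0 u v) (u v : V) :
    B (nabla u) v = δ (B u v) - B u (nabla v) := by
  rw [hBε, hrep, hrep, chernPairing_swap h2 hε hδε hBε]

end OfApplyRightEq

end ChernConnection

open ChernConnection in
/-- Existence and uniqueness of the Chern connection on a vector space: given a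
non-degenerate symmetric or antisymmetric bilinear form `B` and a connection `∇₀`
(relative to a derivation `δ` on the field `R`, with `2 ≠ 0`), there is exactly one
connection `∇` that is `B`-horizontal and such that `∇ − ∇₀` is `B`-symmetric. -/
theorem stmt_18 (R : Type*) [Field R] (h2 : (2 : R) ≠ 0)
    (δ : R → R) (hδadd : ∀ a b, δ (a + b) = δ a + δ b)
    (hδmul : ∀ a b, δ (a * b) = a * δ b + δ a * b)
    (V : Type*) [AddCommGroup V] [Module R V] [FiniteDimensional R V]
    (B : V →ₗ[R] V →ₗ[R] R)
    (hB : (∀ u v, B u v = B v u) ∨ (∀ u v, B u v = - B v u))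
    (hnd : ∀ v, (∀ w, B v w = 0) → v = 0)
    (nabla0 : V → V)
    (h0add : ∀ u v, nabla0 (u + v) = nabla0 u + nabla0 v)
    (h0smul : ∀ (a : R) (v : V), nabla0 (a • v) = δ a • v + a • nabla0 v) :
    ∃! nabla : V → V,
      (∀ u v, nabla (u + v) = nabla u + nabla v) ∧
      (∀ (a : R) (v : V), nabla (a • v) = δ a • v + a • nabla v) ∧
      (∀ u v, δ (B u v) = B (nabla u) v + B u (nabla v)) ∧
      (∀ u v, B (nabla u - nabla0 u) v = B u (nabla v - nabla0 v)) := by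
  have hBnd : B.Nondegenerate := LinearMap.BilinForm.Nondegenerate.ofSeparatingLeft hnd
  obtain ⟨ε, hε, hδε, hBε⟩ := exists_sign_of_symm_or_antisymm hδadd hB
  obtain ⟨nabla, hrep⟩ := exists_apply_right_eq_chernPairing hBnd hδadd hδmul h0add h0smul
  have hleft := apply_left_eq_of_apply_right_eq h2 hε hδε hBε hrep
  refine ⟨nabla, ⟨map_add_of_apply_right_eq hBnd.2 hδadd h0add hrep,
    map_smul_of_apply_right_eq hBnd.2 h2 hδmul h0smul hrep, fun u v => ?_, fun u v => ?_⟩, ?_⟩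
  · rw [hleft]
    ring
  · rw [map_sub, LinearMap.sub_apply, map_sub, hleft, hrep, chernPairing]
    field_simp
    ring
  · rintro nabla' ⟨-, -, hhor, hsymm⟩
    funext v
    exact hBnd.2.eq_of_forall_apply_eq fun u => by
      rw [apply_right_eq_chernPairing h2 hhor hsymm, hrep]
end
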